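/- Let C_g, C_e be complex numbers, and for each natural number M ≥ 1 set β₁ = π/(2M) and define the vector v_M in ℂ² ⊗ ℂ² (photon ⊗ atom) by v_M = C_g·(cos(Mβ₁)·|H⟩ + sin(Mβ₁)·|V⟩) ⊗ |g⟩ + C_e·(cos^M(β₁)·|H⟩ + cos^{M−1}(β₁)·sin(β₁)·|V⟩) ⊗ |e⟩. Then v_M converges to C_g·|V⟩⊗|g⟩ + C_e·|H⟩⊗|e⟩ as M → ∞. Hence the counterfactual special CNOT gate realizes the transformation (C_g|g⟩ + C_e|e⟩)|H⟩ → C_g|g⟩|V⟩ + C_e|e⟩|H⟩ in the limit of infinitely many cycles. -/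

import Mathlib

/-!
Since `M β₁ = π / 2`, the `|g⟩` component is exactly `C_g |V⟩` once `M ≥ 1`. For the `|e⟩`
component, `cos β₁ ≥ 1 - β₁² / 2` and Bernoulli's inequality give
`1 - π² / (8 M) ≤ cos^M β₁ ≤ 1`, while the `|V⟩|e⟩` amplitude is at most `sin β₁ → 0`.
-/

open Real Filter

/-- Basis vector of the photon ⊗ atom space `ℂ² ⊗ ℂ²`:
`ket p a` is `|p⟩ ⊗ |a⟩`, with photon index `0 = |H⟩`, `1 = |V⟩`
and atom index `0 = |g⟩`, `1 = |e⟩`. -/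
noncomputable def ket (p a : Fin 2) : EuclideanSpace ℂ (Fin 2 × Fin 2) :=
  EuclideanSpace.single (p, a) 1

/-- The joint photon–atom state after the `M`-th polarizing beam splitter,
with `β₁ = π/(2M)`:
`v_M = C_g (cos(Mβ₁)|H⟩ + sin(Mβ₁)|V⟩)|g⟩
      + C_e (cos^M(β₁)|H⟩ + cos^{M−1}(β₁) sin(β₁)|V⟩)|e⟩`. -/
noncomputable def vM (Cg Ce : ℂ) (M : ℕ) : EuclideanSpace ℂ (Fin 2 × Fin 2) :=
  (Cg * (Real.cos (M * (π / (2 * M))) : ℂ)) • ket 0 0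
    + (Cg * (Real.sin (M * (π / (2 * M))) : ℂ)) • ket 1 0
    + (Ce * ((Real.cos (π / (2 * M))) ^ M : ℝ)) • ket 0 1
    + (Ce * (((Real.cos (π / (2 * M))) ^ (M - 1) * Real.sin (π / (2 * M))) : ℝ)) • ket 1 1

open Topology

lemma cos_pow_le_one (x : ℝ) (n : ℕ) : cos x ^ n ≤ 1 :=
  (le_abs_self _).trans <| by
    rw [abs_pow]
    exact pow_le_one₀ (abs_nonneg _) (abs_cos_le_one x)

lemma one_sub_mul_sq_div_two_le_cos_pow {x : ℝ} (hx : x ^ 2 ≤ 2) (n : ℕ) :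
    1 - n * (x ^ 2 / 2) ≤ cos x ^ n :=
  calc 1 - n * (x ^ 2 / 2) = 1 + n * (-(x ^ 2 / 2)) := by ring
    _ ≤ (1 + -(x ^ 2 / 2)) ^ n := one_add_mul_le_pow (by linarith) n
    _ ≤ cos x ^ n :=
      pow_le_pow_left₀ (by linarith) (by linarith [one_sub_sq_div_two_le_cos (x := x)]) n

theorem tendsto_cos_div_pow (c : ℝ) : Tendsto (fun n : ℕ => cos (c / n) ^ n) atTop (𝓝 1) := by
  have hlower : Tendsto (fun n : ℕ => 1 - c ^ 2 / 2 / n) atTop (𝓝 1) := by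
    simpa using (tendsto_const_div_atTop_nhds_zero_nat (c ^ 2 / 2)).const_sub (1 : ℝ)
  have hsmall : ∀ᶠ n : ℕ in atTop, (c / n) ^ 2 ≤ 2 :=
    ((tendsto_const_div_atTop_nhds_zero_nat c).pow 2).eventually_le_const (by norm_num)
  refine tendsto_of_tendsto_of_tendsto_of_le_of_le' hlower tendsto_const_nhds ?_
    (.of_forall fun n => cos_pow_le_one _ n)
  filter_upwards [hsmall] with n hn
  have hrate : c ^ 2 / 2 / n = n * ((c / n) ^ 2 / 2) := by
    rcases eq_or_ne n 0 with rfl | hn0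
    · simp
    · field_simp
  rw [hrate]
  exact one_sub_mul_sq_div_two_le_cos_pow hn n

theorem tendsto_cos_div_pow_pred_mul_sin (c : ℝ) :
    Tendsto (fun n : ℕ => cos (c / n) ^ (n - 1) * sin (c / n)) atTop (𝓝 0) := by
  refine squeeze_zero_norm (a := fun n : ℕ => ‖sin (c / n)‖) (fun n => ?_) ?_
  · rw [norm_mul]
    exact mul_le_of_le_one_left (norm_nonneg _)
      (by rw [norm_pow]; exact pow_le_one₀ (norm_nonneg _) (abs_cos_le_one _))
  · simpa using ((continuous_sin.tendsto 0).comp (tendsto_const_div_atTop_nhds_zero_nat c)).norm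

lemma nat_mul_pi_div_two_mul_nat {n : ℕ} (hn : n ≠ 0) : (n : ℝ) * (π / (2 * n)) = π / 2 := by
  field_simp

/-- As `M → ∞`, the output state `v_M` of the counterfactual special CNOT gate
converges to `C_g |V⟩|g⟩ + C_e |H⟩|e⟩`, i.e. the gate realizes
`(C_g|g⟩ + C_e|e⟩)|H⟩ → C_g|g⟩|V⟩ + C_e|e⟩|H⟩` in the limit. -/
theorem counterfactual_CNOT_limit (Cg Ce : ℂ) :
    Tendsto (fun M : ℕ => vM Cg Ce M) atTop
      (nhds (Cg • ket 1 0 + Ce • ket 0 1)) := by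
  have hHg : Tendsto (fun M : ℕ => cos (M * (π / (2 * M)))) atTop (𝓝 0) :=
    tendsto_const_nhds.congr' <| (eventually_ne_atTop 0).mono fun M hM => by
      dsimp only
      rw [nat_mul_pi_div_two_mul_nat hM, cos_pi_div_two]
  have hVg : Tendsto (fun M : ℕ => sin (M * (π / (2 * M)))) atTop (𝓝 1) :=
    tendsto_const_nhds.congr' <| (eventually_ne_atTop 0).mono fun M hM => by
      dsimp only
      rw [nat_mul_pi_div_two_mul_nat hM, sin_pi_div_two]
  have hHe := tendsto_cos_div_pow (π / 2)
  have hVe := tendsto_cos_div_pow_pred_mul_sin (π / 2)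
  simp only [← div_mul_eq_div_div] at hHe hVe
  have := (((hHg.ofReal.const_mul Cg).smul_const (ket 0 0)).add
    ((hVg.ofReal.const_mul Cg).smul_const (ket 1 0))).add
    ((hHe.ofReal.const_mul Ce).smul_const (ket 0 1)) |>.add
    ((hVe.ofReal.const_mul Ce).smul_const (ket 1 1))
  simpa [vM] using this
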